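/- arXiv:2406.01585 — 2 statements merged into one kernel-verified Lean document; each statement's English description precedes it below -/
import Mathlib

section
/- For a piecewise smooth path x : [0,T] → V, the signature satisfies Chen's relation: S(x)_{s,t} = S(x)_{s,u} ⊗ S(x)_{u,t} for all 0 ≤ s ≤ u ≤ t ≤ T. -/
/-! Induct on the word. Splitting the outermost integral of `sigC x (i :: w) s t` at `u`
leaves `sigC x (i :: w) u t`, the splitting with empty left part, plus an integral over
`[s, u]`; expanding the inner factor `sigC x w r t` there by the induction hypothesis and
integrating term by term produces exactly the splittings with nonempty left part. -/

open MeasureTheory intervalIntegral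

/-- Coordinate iterated integrals (the signature) of a path `x : ℝ → ℝ^d`:
for a word `w = (i₁,…,iₙ)`, `sigC x w s t` is the iterated integral
`∫_{s<t₁<⋯<tₙ<t} ẋ^{i₁}(t₁)⋯ẋ^{iₙ}(tₙ) dt₁⋯dtₙ`. -/
noncomputable def sigC {d : ℕ} (x : ℝ → Fin d → ℝ) : List (Fin d) → ℝ → ℝ → ℝ
  | [], _, _ => 1
  | i :: w, s, t => ∫ u in s..t, deriv (fun r => x r i) u * sigC x w u t

namespace sigC

variable {d : ℕ} (x : ℝ → Fin d → ℝ) (hx : ∀ i, Continuous (deriv fun r => x r i))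
include hx

theorem continuous_left (w : List (Fin d)) (t : ℝ) : Continuous fun r => sigC x w r t := by
  induction w with
  | nil => exact continuous_const
  | cons i w ih =>
    have hint : Continuous fun v => deriv (fun r => x r i) v * sigC x w v t := (hx i).mul ih
    have hprim :=
      (continuous_primitive (fun a b => hint.intervalIntegrable (μ := volume) a b) t).neg
    exact hprim.congr fun r => (integral_symm t r).symm

theorem cons_eq_integral_add (i : Fin d) (w : List (Fin d)) (s u t : ℝ) :
    sigC x (i :: w) s t =
      (∫ r in s..u, deriv (fun r => x r i) r * sigC x w r t) + sigC x (i :: w) u t := by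
  have hint : Continuous fun r => deriv (fun r => x r i) r * sigC x w r t :=
    (hx i).mul (continuous_left x hx w t)
  exact (integral_add_adjacent_intervals (hint.intervalIntegrable s u)
    (hint.intervalIntegrable u t)).symm

theorem eq_sum_take_mul_drop (w : List (Fin d)) (s u t : ℝ) :
    sigC x w s t = ∑ k ∈ Finset.range (w.length + 1),
      sigC x (w.take k) s u * sigC x (w.drop k) u t := by
  induction w generalizing s with
  | nil => simp [sigC]
  | cons i w ih =>
    have hexpand : (∫ r in s..u, deriv (fun r => x r i) r * sigC x w r t) =
        ∫ r in s..u, ∑ k ∈ Finset.range (w.length + 1),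
          deriv (fun r => x r i) r * sigC x (w.take k) r u * sigC x (w.drop k) u t := by
      simp only [ih, Finset.mul_sum, mul_assoc]
    have hterm (k : ℕ) : (∫ r in s..u,
        deriv (fun r => x r i) r * sigC x (w.take k) r u * sigC x (w.drop k) u t) =
          sigC x ((i :: w).take (k + 1)) s u * sigC x ((i :: w).drop (k + 1)) u t :=
      integral_mul_const _ _
    have hint (k : ℕ) : IntervalIntegrable (fun r =>
        deriv (fun r => x r i) r * sigC x (w.take k) r u * sigC x (w.drop k) u t) volume s u :=
      (((hx i).mul (continuous_left x hx _ u)).mul continuous_const).intervalIntegrable s u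
    rw [cons_eq_integral_add x hx i w s u t, hexpand, integral_finsetSum fun k _ => hint k,
      List.length_cons, Finset.sum_range_succ' _ (w.length + 1)]
    simp only [hterm, List.take_zero, List.drop_zero, sigC, one_mul]

end sigC

theorem stmt3_general {d : ℕ} (x : ℝ → Fin d → ℝ)
    (hx : ∀ i, ContDiff ℝ 1 (fun r => x r i))
    (s u t : ℝ) :
    ∀ w : List (Fin d), sigC x w s t =
      ∑ k ∈ Finset.range (w.length + 1),
        sigC x (w.take k) s u * sigC x (w.drop k) u t :=
  fun w => sigC.eq_sum_take_mul_drop x (fun i => (hx i).continuous_deriv le_rfl) w s u t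

/-- Chen's relation: for a (piecewise) smooth path, the signature over `[s,t]`
is the tensor product of the signatures over `[s,u]` and `[u,t]`; in
coordinates, the `w`-component is the sum over all splittings of the word. -/
theorem stmt3 {d : ℕ} (x : ℝ → Fin d → ℝ)
    (hx : ∀ i, ContDiff ℝ 1 (fun r => x r i))
    (s u t : ℝ) (hsu : s ≤ u) (hut : u ≤ t) :
    ∀ w : List (Fin d), sigC x w s t =
      ∑ k ∈ Finset.range (w.length + 1),
        sigC x (w.take k) s u * sigC x (w.drop k) u t :=
  stmt3_general x hx s u t
end

section
/- Let ξ be a fractional Brownian motion with Hurst parameter H = 1 on [0,T], i.e., ξ_t = t·Z with Z standard normal. For the tracking problem with dynamics Y^U_t = ∫₀ᵗ U_s ds − ξ_t and cost E[½∫₀ᵀ((Y^U_t)² + κ U_t²)dt], any optimal control is of the form U*_t = Z·f(t) for a deterministic function f, i.e., the optimal control is linear in the slope Z. -/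
open MeasureTheory intervalIntegral ProbabilityTheory

/-- The expected cost of the tracking problem for `ξ_t = t·Z` (fBm with `H=1`):
`J(U) = E[½∫₀ᵀ((∫₀ᵗ U_s ds − t Z)² + κ U_t²) dt]`. -/
noncomputable def trackCost {Ω : Type*} [MeasurableSpace Ω] (Pm : Measure Ω)
    (T κ : ℝ) (Z : Ω → ℝ) (U : ℝ → Ω → ℝ) : ℝ :=
  ∫ ω, ((1 / 2) * ∫ t in (0:ℝ)..T,
    (((∫ s in (0:ℝ)..t, U s ω) - t * Z ω) ^ 2 + κ * (U t ω) ^ 2)) ∂Pm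

/-- Admissible controls for the `H = 1` tracking problem: jointly measurable,
square integrable on `[0,T]×Ω`, and adapted (at each time a measurable function
of the observed slope `Z`). -/
def trackAdm {Ω : Type*} [MeasurableSpace Ω] (Pm : Measure Ω) (T : ℝ)
    (Z : Ω → ℝ) : Set (ℝ → Ω → ℝ) :=
  {U | Measurable (Function.uncurry U) ∧
    Integrable (fun p : ℝ × Ω => (U p.1 p.2) ^ 2)
      ((volume.restrict (Set.Icc 0 T)).prod Pm) ∧
    ∀ t, ∃ g : ℝ → ℝ, Measurable g ∧ ∀ ω, U t ω = g (Z ω)}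

/-!
Project the control, at each time, onto the line spanned by `Z` in `L²(Pm)`: `U = Z f + R`
with `E[Z R_t] = 0`. The target `t Z` and the tracking error of `Z f` are multiples of `Z`, and
integrating in time preserves orthogonality to `Z`, so all cross terms vanish and
`J(U) = J(Z f) + ½ E ∫₀ᵀ ((∫₀ᵗ R)² + κ R²)`. As `Z f` is admissible, optimality of `U` forces the
last term to vanish, and `κ > 0` gives `R = 0`.
-/

lemma sq_integral_mul_le {α : Type*} [MeasurableSpace α] {μ : Measure α} {g h : α → ℝ}
    (hg : MemLp g 2 μ) (hh : MemLp h 2 μ) :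
    (∫ x, g x * h x ∂μ) ^ 2 ≤ (∫ x, g x ^ 2 ∂μ) * ∫ x, h x ^ 2 ∂μ := by
  have hgh : Integrable (fun x => g x * h x) μ := hg.integrable_mul hh
  -- the quadratic `x ↦ ∫ (x g + h)²` is nonnegative, so its discriminant is nonpositive
  have hquad : ∀ x : ℝ, 0 ≤ (∫ a, g a ^ 2 ∂μ) * (x * x) + (2 * ∫ a, g a * h a ∂μ) * x
      + ∫ a, h a ^ 2 ∂μ := by
    intro x
    have hexp : ∫ a, (x * g a + h a) ^ 2 ∂μ = (∫ a, g a ^ 2 ∂μ) * (x * x)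
        + (2 * ∫ a, g a * h a ∂μ) * x + ∫ a, h a ^ 2 ∂μ := by
      have h1 : Integrable (fun a => (x * x) * g a ^ 2) μ := hg.integrable_sq.const_mul _
      have h2 : Integrable (fun a => (2 * x) * (g a * h a)) μ := hgh.const_mul _
      rw [show (fun a => (x * g a + h a) ^ 2)
          = fun a => (x * x) * g a ^ 2 + (2 * x) * (g a * h a) + h a ^ 2 by ext; ring,
        integral_add (show Integrable (fun a => (x * x) * g a ^ 2 + (2 * x) * (g a * h a)) μ
          from h1.add h2) hh.integrable_sq, integral_add h1 h2, MeasureTheory.integral_const_mul,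
        MeasureTheory.integral_const_mul]
      ring
    exact hexp ▸ integral_nonneg fun a => sq_nonneg _
  have := discrim_le_zero hquad
  rw [discrim] at this
  nlinarith

lemma ae_eq_zero_of_integral_sq_add_mul_sq_nonpos {α : Type*} [MeasurableSpace α]
    {μ : Measure α} {κ : ℝ} {A R : α → ℝ} (hκ : 0 < κ) (hA : MemLp A 2 μ) (hR : MemLp R 2 μ)
    (h : ∫ x, (A x ^ 2 + κ * R x ^ 2) ∂μ ≤ 0) :
    ∀ᵐ x ∂μ, R x = 0 := by
  have hnonneg : 0 ≤ fun x => A x ^ 2 + κ * R x ^ 2 := fun x => by positivity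
  have hzero := (integral_eq_zero_iff_of_nonneg hnonneg
    (hA.integrable_sq.add (hR.integrable_sq.const_mul κ))).1
    (le_antisymm h (integral_nonneg hnonneg))
  filter_upwards [hzero] with x hx
  rw [Pi.zero_apply] at hx
  have : κ * R x ^ 2 = 0 := by linarith [sq_nonneg (A x), mul_nonneg hκ.le (sq_nonneg (R x))]
  simpa [hκ.ne'] using this

lemma memLp_two_mul_prod {α β : Type*} [MeasurableSpace α] [MeasurableSpace β]
    {μ : Measure α} {ν : Measure β} {f : α → ℝ} {g : β → ℝ}
    (hf : MemLp f 2 μ) (hg : MemLp g 2 ν) :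
    MemLp (fun z : α × β => f z.1 * g z.2) 2 (μ.prod ν) := by
  refine (memLp_two_iff_integrable_sq (hf.1.comp_fst.mul hg.1.comp_snd)).2 ?_
  simpa only [Pi.mul_apply, mul_pow] using hf.integrable_sq.mul_prod hg.integrable_sq

section UncurryMul

variable {α Ω : Type*} [MeasurableSpace α] [MeasurableSpace Ω] {μ : Measure α} {ν : Measure Ω}
  {Z : Ω → ℝ} {f : α → ℝ}

lemma measurable_uncurry_mul (hZ : Measurable Z) (hf : Measurable f) :
    Measurable (Function.uncurry fun t ω => Z ω * f t) :=
  (hZ.comp measurable_snd).mul (hf.comp measurable_fst)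

lemma memLp_uncurry_mul (hZ2 : MemLp Z 2 ν) (hf2 : MemLp f 2 μ) :
    MemLp (Function.uncurry fun t ω => Z ω * f t) 2 (μ.prod ν) :=
  (memLp_two_mul_prod hf2 hZ2).ae_eq (ae_of_all _ fun _ => mul_comm _ _)

end UncurryMul

section SquareIntegrableSections

variable {α β : Type*} [MeasurableSpace α] [MeasurableSpace β] {μ : Measure α} {ν : Measure β}
  [SFinite μ] [SFinite ν]

lemma MeasureTheory.MemLp.prod_right_ae {F : α × β → ℝ}
    (hF : MemLp F 2 (μ.prod ν)) : ∀ᵐ x ∂μ, MemLp (fun y => F (x, y)) 2 ν := by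
  filter_upwards [hF.1.prodMk_left, hF.integrable_sq.prod_right_ae] with x hmeas hint
  exact (memLp_two_iff_integrable_sq hmeas).2 hint

lemma MeasureTheory.MemLp.prod_left_ae {F : α × β → ℝ}
    (hF : MemLp F 2 (μ.prod ν)) : ∀ᵐ y ∂ν, MemLp (fun x => F (x, y)) 2 μ := by
  filter_upwards [hF.1.prod_swap.prodMk_left, hF.integrable_sq.prod_left_ae] with y hmeas hint
  exact (memLp_two_iff_integrable_sq hmeas).2 hint

end SquareIntegrableSections

lemma measurable_intervalIntegral_prod {α : Type*} [MeasurableSpace α] {W : ℝ → α → ℝ}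
    (hW : Measurable (Function.uncurry W)) (a : ℝ) :
    Measurable fun p : ℝ × α => ∫ s in a..p.1, W s p.2 := by
  have hIoc : ∀ (l u : ℝ × α → ℝ), Measurable l → Measurable u →
      Measurable fun p : ℝ × α => ∫ s in Set.Ioc (l p) (u p), W s p.2 := by
    intro l u hl hu
    have hset : MeasurableSet {q : (ℝ × α) × ℝ | q.2 ∈ Set.Ioc (l q.1) (u q.1)} :=
      (measurableSet_lt (hl.comp measurable_fst) measurable_snd).inter
        (measurableSet_le measurable_snd (hu.comp measurable_fst))
    have hind := ((hW.comp (measurable_snd.prodMk measurable_fst.snd)).indicator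
      hset).stronglyMeasurable.integral_prod_right' (ν := volume)
    simp_rw [← MeasureTheory.integral_indicator measurableSet_Ioc]
    exact hind.measurable
  simp_rw [intervalIntegral]
  exact (hIoc _ _ measurable_const measurable_fst).sub (hIoc _ _ measurable_fst measurable_const)

lemma IntervalIntegrable.of_memLp_Icc {T t : ℝ} {f : ℝ → ℝ}
    (hf : MemLp f 2 (volume.restrict (Set.Icc 0 T))) (ht : t ∈ Set.Icc 0 T) :
    IntervalIntegrable f volume 0 t :=
  (intervalIntegrable_iff_integrableOn_Ioc_of_le ht.1).2 <|
    IntegrableOn.mono_set (hf.integrable one_le_two) fun _ hs => ⟨hs.1.le, hs.2.trans ht.2⟩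

lemma sq_intervalIntegral_le {T t : ℝ} {f : ℝ → ℝ}
    (hf : MemLp f 2 (volume.restrict (Set.Icc 0 T))) (ht : t ∈ Set.Icc 0 T) :
    (∫ s in (0:ℝ)..t, f s) ^ 2 ≤ T * ∫ s in Set.Icc 0 T, f s ^ 2 := by
  have hsub : Set.Ioc 0 t ⊆ Set.Icc 0 T := fun s hs => ⟨hs.1.le, hs.2.trans ht.2⟩
  have hcs := sq_integral_mul_le (memLp_const (1 : ℝ))
    (hf.mono_measure (Measure.restrict_mono hsub le_rfl))
  simp only [one_mul, one_pow, MeasureTheory.integral_const, smul_eq_mul, mul_one,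
    measureReal_restrict_apply_univ, Real.volume_real_Ioc_of_le ht.1, sub_zero] at hcs
  rw [intervalIntegral.integral_of_le ht.1]
  refine hcs.trans (mul_le_mul ht.2 ?_ (integral_nonneg fun _ => sq_nonneg _) (ht.1.trans ht.2))
  exact setIntegral_mono_set hf.integrable_sq (ae_of_all _ fun _ => sq_nonneg _) hsub.eventuallyLE

section Product

variable {Ω : Type*} [MeasurableSpace Ω] {ν : Measure Ω} [SFinite ν] {T : ℝ}

lemma memLp_intervalIntegral_prod {W : ℝ → Ω → ℝ} (hW : Measurable (Function.uncurry W))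
    (hW2 : MemLp (Function.uncurry W) 2 ((volume.restrict (Set.Icc 0 T)).prod ν)) :
    MemLp (fun p : ℝ × Ω => ∫ s in (0:ℝ)..p.1, W s p.2) 2
      ((volume.restrict (Set.Icc 0 T)).prod ν) := by
  have hmeas := measurable_intervalIntegral_prod hW 0
  refine (memLp_two_iff_integrable_sq hmeas.aestronglyMeasurable).2 ?_
  have hdom : Integrable (fun p : ℝ × Ω => T * ∫ s in Set.Icc 0 T, W s p.2 ^ 2)
      ((volume.restrict (Set.Icc 0 T)).prod ν) :=
    (integrable_const T).mul_prod hW2.integrable_sq.integral_prod_right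
  refine hdom.mono' (hmeas.pow_const 2).aestronglyMeasurable ?_
  filter_upwards [Measure.quasiMeasurePreserving_fst.ae (ae_restrict_mem measurableSet_Icc),
    Measure.quasiMeasurePreserving_snd.ae hW2.prod_left_ae] with p hp hsect
  rw [Real.norm_of_nonneg (sq_nonneg _)]
  exact sq_intervalIntegral_le hsect hp

end Product

section Gaussian

variable {Ω : Type*} [MeasurableSpace Ω] {ν : Measure Ω} {Z : Ω → ℝ}

lemma memLp_two_of_map_eq_gaussianReal (hZ : Measurable Z) (hmap : ν.map Z = gaussianReal 0 1) :
    MemLp Z 2 ν :=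
  (memLp_map_measure_iff aestronglyMeasurable_id hZ.aemeasurable).1
    (hmap ▸ memLp_id_gaussianReal 2)

lemma integral_sq_of_map_eq_gaussianReal (hZ : Measurable Z)
    (hmap : ν.map Z = gaussianReal 0 1) :
    ∫ ω, Z ω ^ 2 ∂ν = 1 := by
  rw [← integral_map hZ.aemeasurable (by fun_prop) (f := fun x => x ^ 2), hmap]
  simpa using (variance_of_integral_eq_zero (μ := gaussianReal 0 1) aemeasurable_id
    integral_id_gaussianReal).symm

end Gaussian

section Projection

variable {α Ω : Type*} [MeasurableSpace Ω] {ν : Measure Ω} {Z : Ω → ℝ} {U : α → Ω → ℝ}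

noncomputable def projCoeff (ν : Measure Ω) (Z : Ω → ℝ) (U : α → Ω → ℝ) (t : α) : ℝ :=
  (∫ ω, Z ω * U t ω ∂ν) / ∫ ω, Z ω ^ 2 ∂ν

lemma integral_mul_sub_projCoeff (hZ2 : MemLp Z 2 ν) (hZ0 : ∫ ω, Z ω ^ 2 ∂ν ≠ 0) {t : α}
    (hUt : MemLp (U t) 2 ν) :
    ∫ ω, Z ω * (U t ω - Z ω * projCoeff ν Z U t) ∂ν = 0 := by
  have hZU : Integrable (fun ω => Z ω * U t ω) ν := hZ2.integrable_mul hUt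
  simp_rw [mul_sub, ← mul_assoc, ← sq]
  rw [integral_sub hZU (hZ2.integrable_sq.mul_const _), MeasureTheory.integral_mul_const,
    projCoeff, mul_div_cancel₀ _ hZ0, sub_self]

lemma sq_projCoeff_le (hZ2 : MemLp Z 2 ν) {t : α} (hUt : MemLp (U t) 2 ν) :
    projCoeff ν Z U t ^ 2 ≤ (∫ ω, U t ω ^ 2 ∂ν) / ∫ ω, Z ω ^ 2 ∂ν := by
  rcases (integral_nonneg fun ω => sq_nonneg (Z ω) : 0 ≤ ∫ ω, Z ω ^ 2 ∂ν).eq_or_lt with h0 | hpos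
  · simp [projCoeff, ← h0]
  rw [projCoeff, div_pow, div_le_div_iff₀ (by positivity) hpos, pow_two (∫ ω, Z ω ^ 2 ∂ν),
    ← mul_assoc]
  exact mul_le_mul_of_nonneg_right (by simpa [mul_comm] using sq_integral_mul_le hZ2 hUt) hpos.le

lemma measurable_projCoeff [MeasurableSpace α] [SFinite ν] (hZ : Measurable Z)
    (hU : Measurable (Function.uncurry U)) :
    Measurable (projCoeff ν Z U) :=
  (((hZ.comp measurable_snd).mul hU).stronglyMeasurable.integral_prod_right').measurable.div_const _

lemma memLp_projCoeff [MeasurableSpace α] {μ : Measure α} [SFinite μ] [SFinite ν]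
    (hZ : Measurable Z) (hZ2 : MemLp Z 2 ν) (hU : Measurable (Function.uncurry U))
    (hU2 : MemLp (Function.uncurry U) 2 (μ.prod ν)) :
    MemLp (projCoeff ν Z U) 2 μ := by
  have hmeas := measurable_projCoeff (ν := ν) hZ hU
  refine (memLp_two_iff_integrable_sq hmeas.aestronglyMeasurable).2 <|
    (hU2.integrable_sq.integral_prod_left.div_const (∫ ω, Z ω ^ 2 ∂ν)).mono'
      (hmeas.pow_const 2).aestronglyMeasurable ?_
  filter_upwards [hU2.prod_right_ae] with t ht
  rw [Real.norm_of_nonneg (sq_nonneg _)]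
  exact sq_projCoeff_le hZ2 ht

end Projection

section Orthogonality

variable {Ω : Type*} [MeasurableSpace Ω] {ν : Measure Ω} [SFinite ν] {Z : Ω → ℝ}

lemma integral_prod_eq_zero_of_orthogonal {α : Type*} [MeasurableSpace α] {μ : Measure α}
    [SFinite μ] {a : α → ℝ} {Y : α × Ω → ℝ}
    (hint : Integrable (fun p => a p.1 * (Z p.2 * Y p)) (μ.prod ν))
    (horth : ∀ᵐ t ∂μ, ∫ ω, Z ω * Y (t, ω) ∂ν = 0) :
    ∫ p, a p.1 * (Z p.2 * Y p) ∂(μ.prod ν) = 0 := by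
  rw [integral_prod _ hint]
  refine integral_eq_zero_of_ae ?_
  filter_upwards [horth] with t ht
  rw [MeasureTheory.integral_const_mul, ht, mul_zero, Pi.zero_apply]

lemma integral_mul_intervalIntegral_eq_zero {T t : ℝ} {R : ℝ → Ω → ℝ}
    (hZR : Integrable (fun p : ℝ × Ω => Z p.2 * R p.1 p.2)
      ((volume.restrict (Set.Icc 0 T)).prod ν))
    (horth : ∀ᵐ s ∂(volume.restrict (Set.Icc 0 T)), ∫ ω, Z ω * R s ω ∂ν = 0)
    (ht : t ∈ Set.Icc 0 T) :
    ∫ ω, Z ω * (∫ s in (0:ℝ)..t, R s ω) ∂ν = 0 := by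
  have hsub : Set.Ioc 0 t ⊆ Set.Icc 0 T := fun s hs => ⟨hs.1.le, hs.2.trans ht.2⟩
  calc ∫ ω, Z ω * (∫ s in (0:ℝ)..t, R s ω) ∂ν
      = ∫ ω, (∫ s in Set.Ioc 0 t, Z ω * R s ω) ∂ν := by
        simp_rw [intervalIntegral.integral_of_le ht.1, MeasureTheory.integral_const_mul]
    _ = ∫ s in Set.Ioc 0 t, ∫ ω, Z ω * R s ω ∂ν :=
        integral_integral_swap (f := fun ω s => Z ω * R s ω)
          (hZR.mono_measure (Measure.prod_mono (Measure.restrict_mono hsub le_rfl) le_rfl)).swap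
    _ = 0 := integral_eq_zero_of_ae (ae_restrict_of_ae_restrict_of_subset hsub horth)

end Orthogonality

section Cost

variable {Ω : Type*} [MeasurableSpace Ω] {ν : Measure Ω} [SFinite ν] {T κ : ℝ} {Z : Ω → ℝ}

lemma memLp_trackingError (hZ2 : MemLp Z 2 ν) {W : ℝ → Ω → ℝ}
    (hW : Measurable (Function.uncurry W))
    (hW2 : MemLp (Function.uncurry W) 2 ((volume.restrict (Set.Icc 0 T)).prod ν)) :
    MemLp (fun p : ℝ × Ω => (∫ s in (0:ℝ)..p.1, W s p.2) - p.1 * Z p.2) 2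
      ((volume.restrict (Set.Icc 0 T)).prod ν) := by
  have hid : MemLp (fun t : ℝ => t) 2 (volume.restrict (Set.Icc 0 T)) :=
    (memLp_two_iff_integrable_sq measurable_id.aestronglyMeasurable).2
      ((continuous_pow 2).integrableOn_Icc)
  exact (memLp_intervalIntegral_prod hW hW2).sub (memLp_two_mul_prod hid hZ2)

lemma trackCost_eq_integral_prod (hT : 0 ≤ T) (hZ2 : MemLp Z 2 ν) {W : ℝ → Ω → ℝ}
    (hW : Measurable (Function.uncurry W))
    (hW2 : MemLp (Function.uncurry W) 2 ((volume.restrict (Set.Icc 0 T)).prod ν)) :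
    trackCost ν T κ Z W = (1 / 2) *
      ∫ p, (((∫ s in (0:ℝ)..p.1, W s p.2) - p.1 * Z p.2) ^ 2 + κ * W p.1 p.2 ^ 2)
        ∂((volume.restrict (Set.Icc 0 T)).prod ν) := by
  have hint : Integrable (fun p : ℝ × Ω =>
      ((∫ s in (0:ℝ)..p.1, W s p.2) - p.1 * Z p.2) ^ 2 + κ * W p.1 p.2 ^ 2)
      ((volume.restrict (Set.Icc 0 T)).prod ν) :=
    ((memLp_trackingError hZ2 hW hW2).integrable_sq).add (hW2.integrable_sq.const_mul κ)
  rw [trackCost, MeasureTheory.integral_const_mul, integral_prod _ hint]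
  simp_rw [intervalIntegral.integral_of_le hT, ← integral_Icc_eq_integral_Ioc]
  exact congrArg _ (integral_integral_swap hint.swap)

end Cost

section Decomposition

variable {Ω : Type*} [MeasurableSpace Ω] {ν : Measure Ω} [SFinite ν] {T κ : ℝ} {Z : Ω → ℝ}
  {f : ℝ → ℝ} {R : ℝ → Ω → ℝ}

/-- The cross term of the cost of `Z f + R`; it vanishes because the tracking error of `Z f` is a
multiple of `Z`, and integrating `R` in time keeps it orthogonal to `Z`. -/
lemma integral_trackingError_mul_add_eq_zero (hZ : Measurable Z) (hZ2 : MemLp Z 2 ν)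
    (hf : Measurable f) (hf2 : MemLp f 2 (volume.restrict (Set.Icc 0 T)))
    (hR : Measurable (Function.uncurry R))
    (hR2 : MemLp (Function.uncurry R) 2 ((volume.restrict (Set.Icc 0 T)).prod ν))
    (horth : ∀ᵐ t ∂(volume.restrict (Set.Icc 0 T)), ∫ ω, Z ω * R t ω ∂ν = 0) :
    ∫ p, (((∫ s in (0:ℝ)..p.1, Z p.2 * f s) - p.1 * Z p.2) * (∫ s in (0:ℝ)..p.1, R s p.2)
      + κ * (Z p.2 * f p.1 * R p.1 p.2)) ∂((volume.restrict (Set.Icc 0 T)).prod ν) = 0 := by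
  set μ := (volume.restrict (Set.Icc 0 T)).prod ν
  have hV := memLp_uncurry_mul hZ2 hf2
  have herr : ∀ p : ℝ × Ω, (∫ s in (0:ℝ)..p.1, Z p.2 * f s) - p.1 * Z p.2
      = ((∫ s in (0:ℝ)..p.1, f s) - p.1) * Z p.2 := fun p => by
    rw [intervalIntegral.integral_const_mul]; ring
  have hint₁ : Integrable (fun p : ℝ × Ω => ((∫ s in (0:ℝ)..p.1, f s) - p.1)
      * (Z p.2 * ∫ s in (0:ℝ)..p.1, R s p.2)) μ :=
    ((memLp_trackingError hZ2 (measurable_uncurry_mul hZ hf) hV).integrable_mul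
      (memLp_intervalIntegral_prod hR hR2)).congr (ae_of_all _ fun p => by
        simp only [Pi.mul_apply, herr]; ring)
  have hint₂ : Integrable (fun p : ℝ × Ω => κ * f p.1 * (Z p.2 * R p.1 p.2)) μ :=
    ((hV.integrable_mul hR2).const_mul κ).congr (ae_of_all _ fun p => by
      simp only [Pi.mul_apply, Function.uncurry]; ring)
  have hcross₁ := integral_prod_eq_zero_of_orthogonal
      (a := fun t => (∫ s in (0:ℝ)..t, f s) - t) (Y := fun p => ∫ s in (0:ℝ)..p.1, R s p.2)
      hint₁ <| by
    filter_upwards [ae_restrict_mem measurableSet_Icc] with t ht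
    exact integral_mul_intervalIntegral_eq_zero ((hZ2.comp_snd _).integrable_mul hR2) horth ht
  have hcross₂ : ∫ p, κ * f p.1 * (Z p.2 * R p.1 p.2) ∂μ = 0 :=
    integral_prod_eq_zero_of_orthogonal (a := fun t => κ * f t) (Y := Function.uncurry R)
      hint₂ horth
  calc _ = ∫ p, (((∫ s in (0:ℝ)..p.1, f s) - p.1) * (Z p.2 * ∫ s in (0:ℝ)..p.1, R s p.2)
        + κ * f p.1 * (Z p.2 * R p.1 p.2)) ∂μ := by
        congr 1 with p; rw [herr]; ring
    _ = 0 := by rw [integral_add hint₁ hint₂, hcross₁, hcross₂, add_zero]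

lemma trackCost_add_of_orthogonal (hT : 0 ≤ T) (hZ : Measurable Z) (hZ2 : MemLp Z 2 ν)
    (hf : Measurable f) (hf2 : MemLp f 2 (volume.restrict (Set.Icc 0 T)))
    (hR : Measurable (Function.uncurry R))
    (hR2 : MemLp (Function.uncurry R) 2 ((volume.restrict (Set.Icc 0 T)).prod ν))
    (horth : ∀ᵐ t ∂(volume.restrict (Set.Icc 0 T)), ∫ ω, Z ω * R t ω ∂ν = 0) :
    trackCost ν T κ Z (fun t ω => Z ω * f t + R t ω) =
      trackCost ν T κ Z (fun t ω => Z ω * f t) + (1 / 2) *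
        ∫ p, ((∫ s in (0:ℝ)..p.1, R s p.2) ^ 2 + κ * R p.1 p.2 ^ 2)
          ∂((volume.restrict (Set.Icc 0 T)).prod ν) := by
  set μ := (volume.restrict (Set.Icc 0 T)).prod ν
  have hV := measurable_uncurry_mul hZ hf
  have hV2 := memLp_uncurry_mul hZ2 hf2
  have hEV := memLp_trackingError hZ2 hV hV2
  have hAR := memLp_intervalIntegral_prod hR hR2
  have hGV : Integrable (fun p : ℝ × Ω => ((∫ s in (0:ℝ)..p.1, Z p.2 * f s) - p.1 * Z p.2) ^ 2
      + κ * (Z p.2 * f p.1) ^ 2) μ :=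
    hEV.integrable_sq.add (hV2.integrable_sq.const_mul κ)
  have hGR : Integrable (fun p : ℝ × Ω =>
      (∫ s in (0:ℝ)..p.1, R s p.2) ^ 2 + κ * R p.1 p.2 ^ 2) μ :=
    hAR.integrable_sq.add (hR2.integrable_sq.const_mul κ)
  have hC : Integrable (fun p : ℝ × Ω => ((∫ s in (0:ℝ)..p.1, Z p.2 * f s) - p.1 * Z p.2)
      * (∫ s in (0:ℝ)..p.1, R s p.2) + κ * (Z p.2 * f p.1 * R p.1 p.2)) μ :=
    (hEV.integrable_mul hAR).add ((hV2.integrable_mul hR2).const_mul κ)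
  have hpt : ∀ᵐ p ∂μ,
      ((∫ s in (0:ℝ)..p.1, Z p.2 * f s + R s p.2) - p.1 * Z p.2) ^ 2
        + κ * (Z p.2 * f p.1 + R p.1 p.2) ^ 2
      = ((((∫ s in (0:ℝ)..p.1, Z p.2 * f s) - p.1 * Z p.2) ^ 2 + κ * (Z p.2 * f p.1) ^ 2)
        + ((∫ s in (0:ℝ)..p.1, R s p.2) ^ 2 + κ * R p.1 p.2 ^ 2))
        + 2 * (((∫ s in (0:ℝ)..p.1, Z p.2 * f s) - p.1 * Z p.2) * (∫ s in (0:ℝ)..p.1, R s p.2)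
          + κ * (Z p.2 * f p.1 * R p.1 p.2)) := by
    filter_upwards [Measure.quasiMeasurePreserving_fst.ae (ae_restrict_mem measurableSet_Icc),
      Measure.quasiMeasurePreserving_snd.ae hR2.prod_left_ae] with p hp hRp
    rw [intervalIntegral.integral_add (f := fun s => Z p.2 * f s) (g := fun s => R s p.2)
      ((IntervalIntegrable.of_memLp_Icc hf2 hp).const_mul _)
      (IntervalIntegrable.of_memLp_Icc hRp hp)]
    ring
  have hsplit := integral_add (hGV.add hGR) (hC.const_mul 2)
  simp only [Pi.add_apply] at hsplit
  rw [trackCost_eq_integral_prod (W := fun t ω => Z ω * f t + R t ω) hT hZ2 (hV.add hR)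
      (hV2.add hR2), trackCost_eq_integral_prod hT hZ2 hV hV2, integral_congr_ae hpt, hsplit,
    integral_add hGV hGR, MeasureTheory.integral_const_mul,
    integral_trackingError_mul_add_eq_zero hZ hZ2 hf hf2 hR hR2 horth]
  ring

end Decomposition

/-- Optimal tracking of a fractional Brownian motion with Hurst parameter
`H = 1`, i.e. `ξ_t = t·Z` with `Z` standard normal: any optimal admissible
control is of the form `U*_t = Z·f(t)` for a deterministic function `f`. -/
theorem stmt16 {Ω : Type*} [MeasurableSpace Ω] (Pm : Measure Ω)
    [IsProbabilityMeasure Pm] (Z : Ω → ℝ) (hZmeas : Measurable Z)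
    (hZ : Measure.map Z Pm = gaussianReal 0 1)
    (T κ : ℝ) (hT : 0 < T) (hκ : 0 < κ)
    (U : ℝ → Ω → ℝ) (hU : U ∈ trackAdm Pm T Z)
    (hopt : ∀ U' ∈ trackAdm Pm T Z, trackCost Pm T κ Z U ≤ trackCost Pm T κ Z U') :
    ∃ f : ℝ → ℝ, ∀ᵐ p ∂((volume.restrict (Set.Icc 0 T)).prod Pm),
      U p.1 p.2 = Z p.2 * f p.1 := by
  obtain ⟨hUm, hU2, -⟩ := hU
  replace hU2 := (memLp_two_iff_integrable_sq hUm.aestronglyMeasurable).2 hU2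
  have hZ2 := memLp_two_of_map_eq_gaussianReal hZmeas hZ
  set f := projCoeff Pm Z U
  have hf := measurable_projCoeff (ν := Pm) hZmeas hUm
  have hf2 := memLp_projCoeff hZmeas hZ2 hUm hU2
  have hV := measurable_uncurry_mul hZmeas hf
  have hV2 := memLp_uncurry_mul hZ2 hf2
  set D : ℝ → Ω → ℝ := fun t ω => U t ω - Z ω * f t
  have hD : Measurable (Function.uncurry D) := hUm.sub hV
  have hD2 : MemLp (Function.uncurry D) 2 ((volume.restrict (Set.Icc 0 T)).prod Pm) :=
    hU2.sub hV2
  have horth : ∀ᵐ t ∂(volume.restrict (Set.Icc 0 T)), ∫ ω, Z ω * D t ω ∂Pm = 0 := by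
    filter_upwards [hU2.prod_right_ae] with t ht
    exact integral_mul_sub_projCoeff hZ2
      (by simp [integral_sq_of_map_eq_gaussianReal hZmeas hZ]) ht
  have hcost := trackCost_add_of_orthogonal (κ := κ) hT.le hZmeas hZ2 hf hf2 hD hD2 horth
  rw [show (fun t ω => Z ω * f t + D t ω) = U from funext₂ fun _ _ => add_sub_cancel _ _]
    at hcost
  have hle := hopt _
    ⟨hV, hV2.integrable_sq, fun t => ⟨(· * f t), measurable_mul_const _, fun _ => rfl⟩⟩
  refine ⟨f, ?_⟩
  filter_upwards [ae_eq_zero_of_integral_sq_add_mul_sq_nonpos (R := fun p : ℝ × Ω => D p.1 p.2)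
    hκ (memLp_intervalIntegral_prod hD hD2) hD2 (by linarith)] with p hp
  exact sub_eq_zero.1 hp
end
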